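/- arXiv:1307.7460 — 2 statements merged into one kernel-verified Lean document; each statement's English description precedes it below -/
import Mathlib

section
/- If M is a simple binary matroid of rank r on ground set E, then any basis B of M is a fixing set; consequently fix(M) ≤ r. -/
/-- A matroid automorphism, modelled as a permutation of the ambient type that fixes
every point outside the ground set and preserves independence. -/
def IsMAuto {α : Type*} (M : Matroid α) (σ : Equiv.Perm α) : Prop :=
  (∀ x ∉ M.E, σ x = x) ∧ ∀ I : Set α, M.Indep (σ '' I) ↔ M.Indep I

/-- The automorphism group of a matroid, as a subgroup of `Equiv.Perm α`. -/
def matroidAutGroup {α : Type*} (M : Matroid α) : Subgroup (Equiv.Perm α) where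
  carrier := {σ | IsMAuto M σ}
  one_mem' := ⟨fun _ _ => rfl, fun I => by simp⟩
  mul_mem' := by
    rintro σ τ ⟨hσ1, hσ2⟩ ⟨hτ1, hτ2⟩
    refine ⟨fun x hx => ?_, fun I => ?_⟩
    · simp [Equiv.Perm.mul_apply, hτ1 x hx, hσ1 x hx]
    · rw [Equiv.Perm.coe_mul, Set.image_comp, hσ2, hτ2]
  inv_mem' := by
    rintro σ ⟨hσ1, hσ2⟩
    refine ⟨fun x hx => ?_, fun I => ?_⟩
    · have := hσ1 x hx
      simp only [Equiv.Perm.inv_def, Equiv.symm_apply_eq]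
      exact this.symm
    · have h := hσ2 ((σ⁻¹ : Equiv.Perm α) '' I)
      exact (by rwa [Set.image_image, show (fun x => σ (σ⁻¹ x)) = id by
        funext x; simp, Set.image_id] at h : M.Indep I ↔ M.Indep (⇑σ⁻¹ '' I)).symm

/-- A fixing set of a matroid: a subset of the ground set whose pointwise
stabilizer in the automorphism group is trivial. -/
def IsFixingSet {α : Type*} (M : Matroid α) (A : Set α) : Prop :=
  A ⊆ M.E ∧ ∀ σ : Equiv.Perm α, IsMAuto M σ → (∀ a ∈ A, σ a = a) → σ = 1

/-- The fixing number of a matroid: the least size of a fixing set. -/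
noncomputable def fixNum {α : Type*} (M : Matroid α) : ℕ :=
  sInf {k | ∃ A : Set α, IsFixingSet M A ∧ A.Finite ∧ A.ncard = k}

/-- A circuit of a matroid: a minimal dependent subset of the ground set. -/
def MCirc {α : Type*} (M : Matroid α) (C : Set α) : Prop :=
  C ⊆ M.E ∧ ¬ M.Indep C ∧ ∀ D ⊂ C, M.Indep D

/-!
If `σ` fixes a basis `B` pointwise and `x ∉ B`, then `σ` maps the fundamental circuit `C` of `x`
to a circuit `σ C` with `σ C \ {σ x} = C \ {x}`. Over GF(2) a minimal linear dependency has all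
coefficients `1`, so the vectors of a circuit sum to zero; hence `x` and `σ x` are represented by
the same vector, and in a simple matroid this forces `σ x = x`.
-/

lemma mCirc_iff_isCircuit {α : Type*} {M : Matroid α} {C : Set α} :
    MCirc M C ↔ M.IsCircuit C := by
  rw [Matroid.isCircuit_iff_forall_ssubset, Matroid.Dep]
  exact ⟨fun ⟨hE, hC, hmin⟩ => ⟨⟨hC, hE⟩, hmin⟩, fun ⟨⟨hC, hE⟩, hmin⟩ => ⟨hE, hC, hmin⟩⟩

namespace IsMAuto

variable {α : Type*} {M : Matroid α} {σ : Equiv.Perm α}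

lemma image_ground (hσ : IsMAuto M σ) : σ '' M.E = M.E := by
  have hcompl : σ '' M.Eᶜ = M.Eᶜ := Set.EqOn.image_eq_self fun x hx => hσ.1 x hx
  rwa [Set.image_compl_eq σ.bijective, compl_inj_iff] at hcompl

lemma dep_image_iff (hσ : IsMAuto M σ) {X : Set α} : M.Dep (σ '' X) ↔ M.Dep X := by
  rw [Matroid.Dep, Matroid.Dep, hσ.2]
  nth_rw 1 [← hσ.image_ground]
  rw [Set.image_subset_image_iff σ.injective]

lemma isCircuit_image (hσ : IsMAuto M σ) {C : Set α} (hC : M.IsCircuit C) :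
    M.IsCircuit (σ '' C) := by
  refine Matroid.isCircuit_iff_forall_ssubset.2 ⟨hσ.dep_image_iff.2 hC.dep, fun I hI => ?_⟩
  have hpre : σ.symm '' I ⊂ C := by
    simpa [Set.image_image] using σ.symm.injective.image_strictMono hI
  simpa [Set.image_image] using (hσ.2 _).2 (hC.ssubset_indep hpre)

end IsMAuto

section Representation

variable {α K V : Type*} {M : Matroid α}

lemma injOn_ground_of_forall_three_le_encard [DivisionRing K] [AddCommGroup V] [Module K V]
    {f : α → V} (hf : ∀ I ⊆ M.E, M.Indep I ↔ LinearIndepOn K f I)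
    (hsimple : ∀ C : Set α, MCirc M C → 3 ≤ C.encard) : Set.InjOn f M.E := by
  intro x hx y hy hxy
  by_contra hne
  have hdep : M.Dep {x, y} :=
    ⟨fun hI => hne (((hf _ (Set.pair_subset hx hy)).1 hI).injOn (by simp) (by simp) hxy),
      Set.pair_subset hx hy⟩
  obtain ⟨C, hCxy, hC⟩ := hdep.exists_isCircuit_subset
  have := (hsimple C (mCirc_iff_isCircuit.2 hC)).trans
    ((Set.encard_le_encard hCxy).trans (Set.encard_pair hne).le)
  norm_num at this

variable [AddCommGroup V] [Module (ZMod 2) V] {f : α → V}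

lemma Matroid.IsCircuit.exists_finset_sum_eq_zero
    (hf : ∀ I ⊆ M.E, M.Indep I ↔ LinearIndepOn (ZMod 2) f I) {C : Set α} (hC : M.IsCircuit C) :
    ∃ s : Finset α, ↑s = C ∧ ∑ x ∈ s, f x = 0 := by
  obtain ⟨l, hlC, hl0, hlne⟩ :=
    linearDepOn_iff.1 fun h => hC.not_indep ((hf C hC.subset_ground).2 h)
  have hsupp : ↑l.support = C := by
    refine hC.eq_of_not_indep_subset (fun h => hlne ?_) hlC
    exact linearIndepOn_iff.1 ((hf _ (hlC.trans hC.subset_ground)).1 h) l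
      ((Finsupp.mem_supported _ _).2 subset_rfl) hl0
  refine ⟨l.support, hsupp, ?_⟩
  rw [← hl0]
  refine Finset.sum_congr rfl fun x hx => ?_
  have hZMod2 : ∀ a : ZMod 2, a ≠ 0 → a = 1 := by decide
  rw [hZMod2 _ (Finsupp.mem_support_iff.1 hx), one_smul]

end Representation

section SimpleBinary

variable {α V : Type*} [AddCommGroup V] [Module (ZMod 2) V] {M : Matroid α} {f : α → V}

lemma eq_of_isCircuit_diff_singleton_eq
    (hf : ∀ I ⊆ M.E, M.Indep I ↔ LinearIndepOn (ZMod 2) f I)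
    (hsimple : ∀ C : Set α, MCirc M C → 3 ≤ C.encard) {C₁ C₂ : Set α} {x₁ x₂ : α}
    (hC₁ : M.IsCircuit C₁) (hC₂ : M.IsCircuit C₂) (hx₁ : x₁ ∈ C₁) (hx₂ : x₂ ∈ C₂)
    (hdiff : C₁ \ {x₁} = C₂ \ {x₂}) : x₁ = x₂ := by
  classical
  obtain ⟨s₁, rfl, hs₁⟩ := hC₁.exists_finset_sum_eq_zero hf
  obtain ⟨s₂, rfl, hs₂⟩ := hC₂.exists_finset_sum_eq_zero hf
  have herase : s₁.erase x₁ = s₂.erase x₂ := Finset.coe_injective (by simpa using hdiff)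
  rw [← Finset.add_sum_erase _ _ hx₁] at hs₁
  rw [← Finset.add_sum_erase _ _ hx₂, ← herase] at hs₂
  exact injOn_ground_of_forall_three_le_encard hf hsimple (hC₁.subset_ground hx₁)
    (hC₂.subset_ground hx₂) (add_right_cancel (hs₁.trans hs₂.symm))

lemma isFixingSet_of_isBase (hf : ∀ I ⊆ M.E, M.Indep I ↔ LinearIndepOn (ZMod 2) f I)
    (hsimple : ∀ C : Set α, MCirc M C → 3 ≤ C.encard) {B : Set α} (hB : M.IsBase B) :
    IsFixingSet M B := by
  refine ⟨hB.subset_ground, fun σ hσ hσB => Equiv.ext fun x => ?_⟩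
  by_cases hxE : x ∈ M.E
  swap
  · exact hσ.1 x hxE
  by_cases hxB : x ∈ B
  · exact hσB x hxB
  set C := M.fundCircuit x B
  have hC : M.IsCircuit C := hB.fundCircuit_isCircuit hxE hxB
  have hCB : C \ {x} ⊆ B := by
    simpa [Set.sdiff_subset_iff] using M.fundCircuit_subset_insert x B
  have hσC : σ '' C \ {σ x} = C \ {x} := by
    rw [← Set.image_singleton, ← Set.image_sdiff σ.injective]
    exact Set.EqOn.image_eq_self fun y hy => hσB y (hCB hy)
  exact eq_of_isCircuit_diff_singleton_eq hf hsimple (hσ.isCircuit_image hC) hC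
    (Set.mem_image_of_mem σ (M.mem_fundCircuit x B)) (M.mem_fundCircuit x B) hσC

end SimpleBinary

lemma fixNum_le_ncard {α : Type*} {M : Matroid α} {A : Set α} (hA : IsFixingSet M A)
    (hAfin : A.Finite) : fixNum M ≤ A.ncard :=
  Nat.sInf_le ⟨A, hA, hAfin, rfl⟩

/-- In a simple binary matroid of rank `r`, every basis is a fixing set, so the fixing
number is at most `r`. -/
theorem stmt9 {α : Type*} (M : Matroid α)
    (hsimple : ∀ C : Set α, MCirc M C → 3 ≤ C.encard)
    (hbinary : ∃ (n : ℕ) (f : α → (Fin n → ZMod 2)), ∀ I : Set α, I ⊆ M.E →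
      (M.Indep I ↔ LinearIndependent (ZMod 2) (fun x : I => f x)))
    (r : ℕ) (B : Set α) (hB : M.IsBase B) (hBr : B.ncard = r) (hBfin : B.Finite) :
    IsFixingSet M B ∧ fixNum M ≤ r := by
  obtain ⟨n, f, hf⟩ := hbinary
  have hfix : IsFixingSet M B := isFixingSet_of_isBase hf hsimple hB
  exact ⟨hfix, hBr ▸ fixNum_le_ncard hfix hBfin⟩
end

section
/- For n ≥ 4, the fixing number of the bicircular matroid of the wheel graph W_n equals 2; in particular, two adjacent rim edges form a fixing set. -/
/-- The vertex support of a set of edges. -/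
def edgeSupp {V : Type*} (C : Set (Sym2 V)) : Set V := {v | ∃ e ∈ C, v ∈ e}

/-- A set of edges is connected if it is nonempty and any two supported vertices are
joined by a walk using only these edges. -/
def EdgeConn {V : Type*} (C : Set (Sym2 V)) : Prop :=
  C.Nonempty ∧ ∀ u ∈ edgeSupp C, ∀ v ∈ edgeSupp C, (SimpleGraph.fromEdgeSet C).Reachable u v

/-- The edge set of a cycle of the graph `G`. -/
def IsCycleSet {V : Type*} (G : SimpleGraph V) (C : Set (Sym2 V)) : Prop :=
  ∃ (v : V) (w : G.Walk v v), w.IsCycle ∧ C = {e | e ∈ w.edges}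

/-- A bicycle of `G`: a minimal connected edge set with more edges than vertices,
equivalently a subdivision of two loops at a vertex, two loops joined by an edge,
or three edges joining the same pair of vertices. -/
def IsBicycle {V : Type*} (G : SimpleGraph V) (C : Set (Sym2 V)) : Prop :=
  C ⊆ G.edgeSet ∧ C.Finite ∧ EdgeConn C ∧ (edgeSupp C).ncard < C.ncard ∧
    ∀ D ⊂ C, ¬ (EdgeConn D ∧ D.Finite ∧ (edgeSupp D).ncard < D.ncard)

/-- The wheel graph `W n`: hub `none` joined to all rim vertices `some i`,
with rim vertices `some i`, `some (i+1)` adjacent. -/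
def wheel (n : ℕ) : SimpleGraph (Option (ZMod n)) :=
  SimpleGraph.fromRel (fun a b => a = none ∨ ∃ i : ZMod n, a = some i ∧ b = some (i + 1))

/-!
A graph automorphism of `W_n` induces a matroid automorphism of its bicircular matroid, since it
maps bicycles to bicycles. Every edge is fixed by some reflection of the wheel, and a reflection
moves some spoke, so no set of at most one edge is fixing.

For `n ≥ 4` the bicycles with five edges are exactly the thetas `Wheel.theta i`, made of three
consecutive spokes and the two rim edges between them, so a matroid automorphism permutes the
thetas. A rim edge lies in two thetas and a spoke in three, and an edge is determined by the set
of thetas containing it. Hence the induced permutation of theta indices is an automorphism of the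
`n`-cycle that determines the matroid automorphism; fixing two adjacent rim edges fixes two
adjacent indices, hence all of them, hence every edge.
-/

open Set Function

section Matroid

variable {α : Type*} {M : Matroid α} {σ : Equiv.Perm α}

lemma mcirc_iff_isCircuit {C : Set α} : MCirc M C ↔ M.IsCircuit C := by
  rw [Matroid.isCircuit_iff_forall_ssubset, Matroid.Dep, MCirc]
  tauto

lemma Equiv.Perm.apply_mem_iff_of_fixes_compl {s : Set α} (h : ∀ x ∉ s, σ x = x) (x : α) :
    σ x ∈ s ↔ x ∈ s := by
  constructor
  · intro hσx
    by_contra hx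
    exact hx (h x hx ▸ hσx)
  · intro hx
    by_contra hσx
    rw [σ.injective (h _ hσx)] at hσx
    exact hσx hx

lemma IsMAuto.mcirc_image (hσ : IsMAuto M σ) {C : Set α} (hC : MCirc M C) :
    MCirc M (σ '' C) := by
  obtain ⟨hCE, hdep, hmin⟩ := hC
  refine ⟨?_, (hσ.2 C).not.2 hdep, fun D hD => ?_⟩
  · rw [image_subset_iff]
    exact fun x hx => (Equiv.Perm.apply_mem_iff_of_fixes_compl hσ.1 x).2 (hCE hx)
  · obtain ⟨D, hDC, rfl⟩ := subset_image_iff.1 hD.subset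
    exact (hσ.2 D).2 (hmin D ⟨hDC, fun h => hD.2 (image_mono h)⟩)

lemma isMAuto_of_mcirc_image_iff (hfix : ∀ x ∉ M.E, σ x = x)
    (hcirc : ∀ C, MCirc M (σ '' C) ↔ MCirc M C) : IsMAuto M σ := by
  refine ⟨hfix, fun I => ?_⟩
  simp only [Matroid.indep_iff_forall_subset_not_isCircuit', ← mcirc_iff_isCircuit,
    forall_subset_image_iff, hcirc, image_subset_iff]
  exact and_congr Iff.rfl
    ⟨fun h x hx => (Equiv.Perm.apply_mem_iff_of_fixes_compl hfix x).1 (h hx),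
      fun h x hx => (Equiv.Perm.apply_mem_iff_of_fixes_compl hfix x).2 (h hx)⟩

end Matroid

section EdgeSets

variable {V W : Type*}

lemma edgeSupp_image_map (f : V → W) (D : Set (Sym2 V)) :
    edgeSupp (Sym2.map f '' D) = f '' edgeSupp D := by
  ext w
  simp only [edgeSupp, mem_ofPred_eq, mem_image, exists_exists_and_eq_and, Sym2.mem_map]
  tauto

lemma edgeSupp_finite {D : Set (Sym2 V)} (hD : D.Finite) : (edgeSupp D).Finite := by
  have : edgeSupp D = ⋃ e ∈ D, {v | v ∈ e} := by ext; simp [edgeSupp]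
  rw [this]
  exact hD.biUnion fun e _ => e.ind (fun x y => by simp [Sym2.mem_iff, ofPred_or])

lemma EdgeConn.image_map {f : V → W} (hf : Injective f) {D : Set (Sym2 V)} (hD : EdgeConn D) :
    EdgeConn (Sym2.map f '' D) := by
  obtain ⟨hne, hreach⟩ := hD
  let φ : SimpleGraph.fromEdgeSet D →g SimpleGraph.fromEdgeSet (Sym2.map f '' D) :=
    ⟨f, fun {a b} h => by
      rw [SimpleGraph.fromEdgeSet_adj] at h ⊢
      exact ⟨⟨s(a, b), h.1, rfl⟩, hf.ne h.2⟩⟩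
  refine ⟨hne.image _, ?_⟩
  rw [edgeSupp_image_map]
  rintro _ ⟨u, hu, rfl⟩ _ ⟨v, hv, rfl⟩
  exact (hreach u hu v hv).map φ

lemma ncard_edgeSupp_image_map {f : V → W} (hf : Injective f) (D : Set (Sym2 V)) :
    (edgeSupp (Sym2.map f '' D)).ncard = (edgeSupp D).ncard := by
  rw [edgeSupp_image_map, ncard_image_of_injective _ hf]

lemma IsBicycle.image_map {G : SimpleGraph V} {G' : SimpleGraph W} (g : G ≃g G')
    {C : Set (Sym2 V)} (hC : IsBicycle G C) : IsBicycle G' (Sym2.map g '' C) := by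
  have hg := Sym2.map.injective g.injective
  have hg' := Sym2.map.injective g.symm.injective
  obtain ⟨hCG, hfin, hconn, hlt, hmin⟩ := hC
  refine ⟨?_, hfin.image _, hconn.image_map g.injective, ?_,
    fun D hD ⟨hDconn, hDfin, hDlt⟩ => ?_⟩
  · rintro _ ⟨e, he, rfl⟩
    exact g.map_mem_edgeSet_iff.2 (hCG he)
  · rwa [ncard_image_of_injective _ hg, ncard_edgeSupp_image_map g.injective]
  · have hback : Sym2.map g.symm '' (Sym2.map g '' C) = C := by
      simp [image_image, Sym2.map_map]
    refine hmin _ (hback ▸ hg'.image_strictMono hD)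
      ⟨hDconn.image_map g.symm.injective, hDfin.image _, ?_⟩
    rwa [ncard_image_of_injective _ hg', ncard_edgeSupp_image_map g.symm.injective]

lemma ncard_le_choose_two_ncard_edgeSupp {D : Set (Sym2 V)} (hfin : D.Finite)
    (hD : ∀ e ∈ D, ¬ e.IsDiag) : D.ncard ≤ (edgeSupp D).ncard.choose 2 := by
  classical
  set s := (edgeSupp_finite hfin).toFinset
  have hsub : D ⊆ ↑(s.offDiag.image (uncurry Sym2.mk)) := by
    intro e he
    induction e using Sym2.ind with
    | _ x y =>
      have hxy : x ≠ y := fun h => hD _ he (Sym2.mk_isDiag_iff.2 h)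
      simp only [Finset.coe_image, mem_image, Finset.mem_coe, Finset.mem_offDiag, s,
        Finite.mem_toFinset]
      exact ⟨(x, y), ⟨⟨_, he, Sym2.mem_mk_left x y⟩, ⟨_, he, Sym2.mem_mk_right x y⟩, hxy⟩, rfl⟩
  calc D.ncard ≤ (s.offDiag.image (uncurry Sym2.mk)).card := by
        rw [← ncard_coe_finset]
        exact ncard_le_ncard hsub (Finset.finite_toSet _)
    _ = (edgeSupp D).ncard.choose 2 := by
        rw [Sym2.card_image_offDiag, ncard_eq_toFinset_card _ (edgeSupp_finite hfin)]

lemma five_le_ncard_of_ncard_edgeSupp_lt {G : SimpleGraph V} {D : Set (Sym2 V)}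
    (hDG : D ⊆ G.edgeSet) (hfin : D.Finite) (hlt : (edgeSupp D).ncard < D.ncard) :
    5 ≤ D.ncard := by
  have hle := ncard_le_choose_two_ncard_edgeSupp hfin
    fun e he => G.not_isDiag_of_mem_edgeSet (hDG he)
  by_contra! h
  have : (edgeSupp D).ncard ≤ 3 := by omega
  interval_cases (edgeSupp D).ncard <;> simp only [Nat.choose] at hle <;> omega

lemma EdgeConn.of_forall_eq_or_mem {D : Set (Sym2 V)} {v : V} (hD : D.Nonempty)
    (hv : ∀ w ∈ edgeSupp D, w = v ∨ s(v, w) ∈ D) : EdgeConn D := by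
  have hreach : ∀ w ∈ edgeSupp D, (SimpleGraph.fromEdgeSet D).Reachable v w := by
    intro w hw
    rcases hv w hw with rfl | hvw
    · rfl
    · by_cases h : v = w
      · rw [h]
      · exact SimpleGraph.Adj.reachable (SimpleGraph.fromEdgeSet_adj _ |>.2 ⟨hvw, h⟩)
  exact ⟨hD, fun u hu w hw => (hreach u hu).symm.trans (hreach w hw)⟩

end EdgeSets

namespace SimpleGraph.Iso

variable {V : Type*} {G : SimpleGraph V}

open Classical in
noncomputable def edgePerm (g : G ≃g G) : Equiv.Perm (Sym2 V) :=
  Equiv.Perm.ofSubtype g.mapEdgeSet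

lemma edgePerm_apply_of_mem (g : G ≃g G) {e : Sym2 V} (he : e ∈ G.edgeSet) :
    g.edgePerm e = Sym2.map g e := by
  classical
  rw [edgePerm, Equiv.Perm.ofSubtype_apply_of_mem _ he]
  rfl

lemma edgePerm_apply_of_notMem (g : G ≃g G) {e : Sym2 V} (he : e ∉ G.edgeSet) :
    g.edgePerm e = e := by
  classical
  exact Equiv.Perm.ofSubtype_apply_of_not_mem _ he

lemma isMAuto_edgePerm {M : Matroid (Sym2 V)} (hE : M.E = G.edgeSet)
    (hC : ∀ C, MCirc M C ↔ IsBicycle G C) (g : G ≃g G) : IsMAuto M g.edgePerm := by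
  have hfix : ∀ e ∉ G.edgeSet, g.edgePerm e = e := fun e => g.edgePerm_apply_of_notMem
  refine isMAuto_of_mcirc_image_iff (hE ▸ hfix) fun C => ?_
  rw [hC, hC]
  by_cases hCG : C ⊆ G.edgeSet
  · have hmap : g.edgePerm '' C = Sym2.map g '' C :=
      image_congr fun e he => g.edgePerm_apply_of_mem (hCG he)
    have hback : Sym2.map g.symm '' (Sym2.map g '' C) = C := by
      simp [image_image, Sym2.map_map]
    rw [hmap]
    exact ⟨fun h => hback ▸ h.image_map g.symm, fun h => h.image_map g⟩
  · have : ¬ g.edgePerm '' C ⊆ G.edgeSet := by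
      rwa [image_subset_iff, show g.edgePerm ⁻¹' G.edgeSet = G.edgeSet from
        ext (Equiv.Perm.apply_mem_iff_of_fixes_compl hfix)]
    exact iff_of_false (fun h => this h.1) (fun h => hCG h.1)

end SimpleGraph.Iso

lemma ZMod.one_ne_zero_and_two_ne_zero_and_three_ne_zero {n : ℕ} (hn : 4 ≤ n) :
    (1 : ZMod n) ≠ 0 ∧ (2 : ZMod n) ≠ 0 ∧ (3 : ZMod n) ≠ 0 := by
  have key (k : ℕ) (hk : k ≠ 0) (hkn : k < n) : (k : ZMod n) ≠ 0 := by
    rw [Ne, ZMod.natCast_eq_zero_iff]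
    exact fun h => absurd (Nat.le_of_dvd (Nat.pos_of_ne_zero hk) h) (by omega)
  exact ⟨by exact_mod_cast key 1 (by omega) (by omega),
    by exact_mod_cast key 2 (by omega) (by omega), by exact_mod_cast key 3 (by omega) (by omega)⟩

lemma ZMod.perm_eq_one_of_adjacent {n : ℕ} [NeZero n] {π : Equiv.Perm (ZMod n)}
    (hadj : ∀ x, π (x + 1) = π x + 1 ∨ π x = π (x + 1) + 1) {a : ZMod n} (h₀ : π a = a)
    (h₁ : π (a + 1) = a + 1) : π = 1 := by
  have key (m : ℕ) : π (a + m) = a + m ∧ π (a + m + 1) = a + m + 1 := by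
    induction m with
    | zero => simpa using ⟨h₀, h₁⟩
    | succ m ih =>
      rw [Nat.cast_succ, ← add_assoc]
      refine ⟨ih.2, ?_⟩
      rcases hadj (a + m + 1) with h | h
      · rw [h, ih.2]
      · -- only possible when `2 = 0`, where stepping back and forth agree
        have hback : a + m + 1 + 1 = a + m :=
          π.injective (by linear_combination ih.2 - h - ih.1)
        rw [hback, ih.1]
  ext x
  simpa using (key (x - a).val).1

namespace Wheel

variable {n : ℕ}

def spoke (i : ZMod n) : Sym2 (Option (ZMod n)) := s(none, some i)

def rim (i : ZMod n) : Sym2 (Option (ZMod n)) := s(some i, some (i + 1))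

lemma spoke_injective : Injective (spoke (n := n)) := fun i j h => by simpa [spoke] using h

lemma rim_injective (h2 : (2 : ZMod n) ≠ 0) : Injective (rim (n := n)) := by
  intro i j h
  simp only [rim, Sym2.eq_iff, Option.some.injEq] at h
  grind

lemma spoke_ne_rim (i j : ZMod n) : spoke i ≠ rim j := by simp [spoke, rim]

lemma mem_edgeSet (h1 : (1 : ZMod n) ≠ 0) {e : Sym2 (Option (ZMod n))} :
    e ∈ (wheel n).edgeSet ↔ (∃ i, e = spoke i) ∨ ∃ i, e = rim i := by
  induction e using Sym2.ind with
  | _ x y =>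
    rcases x with _ | x <;> rcases y with _ | y <;>
      simp [wheel, spoke, rim]
    grind

lemma spoke_mem_edgeSet (h1 : (1 : ZMod n) ≠ 0) (i : ZMod n) : spoke i ∈ (wheel n).edgeSet :=
  (mem_edgeSet h1).2 (.inl ⟨i, rfl⟩)

lemma rim_mem_edgeSet (h1 : (1 : ZMod n) ≠ 0) (i : ZMod n) : rim i ∈ (wheel n).edgeSet :=
  (mem_edgeSet h1).2 (.inr ⟨i, rfl⟩)

def reflection (c : ZMod n) : wheel n ≃g wheel n where
  toEquiv := (Equiv.subLeft c).optionCongr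
  map_rel_iff' := by
    rintro (_ | a) (_ | b) <;> simp [wheel]
    grind

lemma map_reflection_spoke (c i : ZMod n) :
    Sym2.map (reflection c) (spoke i) = spoke (c - i) := rfl

lemma map_reflection_rim (c i : ZMod n) :
    Sym2.map (reflection c) (rim i) = rim (c - i - 1) := by
  show s(some (c - i), some (c - (i + 1))) = s(some (c - i - 1), some (c - i - 1 + 1))
  rw [Sym2.eq_swap, sub_add_cancel, sub_sub]

lemma exists_map_reflection_eq (h1 : (1 : ZMod n) ≠ 0) {e : Sym2 (Option (ZMod n))}
    (he : e ∈ (wheel n).edgeSet) : ∃ c, Sym2.map (reflection c) e = e := by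
  rcases (mem_edgeSet h1).1 he with ⟨i, rfl⟩ | ⟨i, rfl⟩
  · exact ⟨2 * i, by rw [map_reflection_spoke]; ring_nf⟩
  · exact ⟨2 * i + 1, by rw [map_reflection_rim]; ring_nf⟩

lemma edgePerm_reflection_ne_one (h1 : (1 : ZMod n) ≠ 0) (h2 : (2 : ZMod n) ≠ 0) (c : ZMod n) :
    (reflection c).edgePerm ≠ 1 := by
  obtain ⟨i, hi⟩ : ∃ i : ZMod n, c - i ≠ i := by
    by_cases hc : c = 0
    · exact ⟨1, fun h => h2 (by linear_combination hc - h)⟩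
    · exact ⟨0, by simpa using hc⟩
  intro h
  have := congr($h (spoke i))
  rw [SimpleGraph.Iso.edgePerm_apply_of_mem _ (spoke_mem_edgeSet h1 i), map_reflection_spoke,
    Equiv.Perm.one_apply] at this
  exact hi (spoke_injective this)

/-- The theta subgraph whose branch vertices are the hub and `some (i + 1)`. -/
def theta (i : ZMod n) : Set (Sym2 (Option (ZMod n))) :=
  {spoke i, spoke (i + 1), spoke (i + 2), rim i, rim (i + 1)}

lemma spoke_mem_theta {a i : ZMod n} :
    spoke a ∈ theta i ↔ a = i ∨ a = i + 1 ∨ a = i + 2 := by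
  simp [theta, spoke_injective.eq_iff, spoke_ne_rim]

lemma rim_mem_theta (h2 : (2 : ZMod n) ≠ 0) {a i : ZMod n} :
    rim a ∈ theta i ↔ a = i ∨ a = i + 1 := by
  simp [theta, (rim_injective h2).eq_iff, (spoke_ne_rim _ _).symm]

lemma finite_theta (i : ZMod n) : (theta i).Finite := by
  simp [theta]

lemma theta_subset_edgeSet (h1 : (1 : ZMod n) ≠ 0) (i : ZMod n) :
    theta i ⊆ (wheel n).edgeSet := by
  rintro e (rfl | rfl | rfl | rfl | rfl) <;>
    first | exact spoke_mem_edgeSet h1 _ | exact rim_mem_edgeSet h1 _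

lemma ncard_theta (h1 : (1 : ZMod n) ≠ 0) (h2 : (2 : ZMod n) ≠ 0) (i : ZMod n) :
    (theta i).ncard = 5 := by
  rw [theta, ncard_insert_of_notMem, ncard_insert_of_notMem, ncard_insert_of_notMem, ncard_pair]
  all_goals simp [spoke_injective.eq_iff, (rim_injective h2).eq_iff, spoke_ne_rim, h1, h2,
    show (1 : ZMod n) ≠ 2 from fun h => h1 (by linear_combination -h)]

lemma edgeSupp_theta (i : ZMod n) :
    edgeSupp (theta i) = {none, some i, some (i + 1), some (i + 2)} := by
  ext v
  simp only [edgeSupp, theta, mem_insert_iff, mem_singleton_iff, exists_eq_or_imp, exists_eq_left,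
    spoke, rim, Sym2.mem_iff, add_assoc, one_add_one_eq_two, mem_ofPred_eq]
  tauto

lemma ncard_edgeSupp_theta (h1 : (1 : ZMod n) ≠ 0) (h2 : (2 : ZMod n) ≠ 0) (i : ZMod n) :
    (edgeSupp (theta i)).ncard = 4 := by
  rw [edgeSupp_theta, ncard_insert_of_notMem, ncard_insert_of_notMem, ncard_pair]
  all_goals simp [h1, h2, show (1 : ZMod n) ≠ 2 from fun h => h1 (by linear_combination -h)]

lemma isBicycle_theta (h1 : (1 : ZMod n) ≠ 0) (h2 : (2 : ZMod n) ≠ 0) (i : ZMod n) :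
    IsBicycle (wheel n) (theta i) := by
  refine ⟨theta_subset_edgeSet h1 i, finite_theta i, ?_, ?_,
    fun D hD ⟨_, hDfin, hDlt⟩ => ?_⟩
  · refine EdgeConn.of_forall_eq_or_mem (v := none) ⟨spoke i, by simp [theta]⟩ fun w hw => ?_
    rw [edgeSupp_theta] at hw
    rcases hw with rfl | rfl | rfl | rfl
    · exact .inl rfl
    all_goals exact .inr (by simp [theta, spoke])
  · rw [ncard_theta h1 h2, ncard_edgeSupp_theta h1 h2]
    norm_num
  · have h5 := five_le_ncard_of_ncard_edgeSupp_lt (hD.subset.trans (theta_subset_edgeSet h1 i))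
      hDfin hDlt
    have := ncard_lt_ncard hD (finite_theta i)
    rw [ncard_theta h1 h2] at this
    omega

lemma theta_injective (h1 : (1 : ZMod n) ≠ 0) (h2 : (2 : ZMod n) ≠ 0) :
    Injective (theta (n := n)) := by
  intro i j h
  have hi : rim i ∈ theta j := h ▸ by simp [theta]
  have hi' : rim (i + 1) ∈ theta j := h ▸ by simp [theta]
  rw [rim_mem_theta h2] at hi hi'
  rcases hi with hi | hi
  · exact hi
  rcases hi' with hi' | hi'
  · exact absurd (by linear_combination hi' - hi) h2
  · exact absurd (by linear_combination hi' - hi) h1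

lemma subset_theta_of_edgeSupp_subset (h1 : (1 : ZMod n) ≠ 0) (h2 : (2 : ZMod n) ≠ 0)
    (h3 : (3 : ZMod n) ≠ 0) {C : Set (Sym2 (Option (ZMod n)))} (hCG : C ⊆ (wheel n).edgeSet)
    {i : ZMod n} (hC : edgeSupp C ⊆ edgeSupp (theta i)) : C ⊆ theta i := by
  intro e he
  have hv (a : ZMod n) (ha : some a ∈ e) : a = i ∨ a = i + 1 ∨ a = i + 2 := by
    simpa [edgeSupp_theta] using hC ⟨e, he, ha⟩
  rcases (mem_edgeSet h1).1 (hCG he) with ⟨a, rfl⟩ | ⟨a, rfl⟩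
  · exact spoke_mem_theta.2 (hv a (by simp [spoke]))
  · rw [rim_mem_theta h2]
    rcases hv a (by simp [rim]) with rfl | rfl | rfl
    · exact .inl rfl
    · exact .inr rfl
    · rcases hv (i + 2 + 1) (by simp [rim]) with h | h | h
      · exact absurd (by linear_combination h) h3
      · exact absurd (by linear_combination h) h2
      · exact absurd (by linear_combination h) h1

lemma ncard_preimage_spoke_add_ncard_preimage_rim [NeZero n] (h1 : (1 : ZMod n) ≠ 0)
    (h2 : (2 : ZMod n) ≠ 0) {C : Set (Sym2 (Option (ZMod n)))} (hCG : C ⊆ (wheel n).edgeSet) :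
    (spoke ⁻¹' C).ncard + (rim ⁻¹' C).ncard = C.ncard := by
  have hC : spoke '' (spoke ⁻¹' C) ∪ rim '' (rim ⁻¹' C) = C := by
    refine Subset.antisymm (union_subset (image_preimage_subset _ _) (image_preimage_subset _ _))
      fun e he => ?_
    rcases (mem_edgeSet h1).1 (hCG he) with ⟨a, rfl⟩ | ⟨a, rfl⟩
    exacts [.inl (mem_image_of_mem _ he), .inr (mem_image_of_mem _ he)]
  have hdisj : Disjoint (spoke '' (spoke ⁻¹' C)) (rim '' (rim ⁻¹' C)) := by
    simp [disjoint_left, (spoke_ne_rim _ _).symm]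
  rw [← ncard_image_of_injective _ spoke_injective,
    ← ncard_image_of_injective _ (rim_injective h2), ← ncard_union_eq hdisj, hC]

lemma exists_edgeSupp_theta_subset [NeZero n] (h1 : (1 : ZMod n) ≠ 0) (h2 : (2 : ZMod n) ≠ 0)
    {C : Set (Sym2 (Option (ZMod n)))} (hCG : C ⊆ (wheel n).edgeSet) (hC : C.ncard = 5)
    (hsupp : (edgeSupp C).ncard ≤ 4) : ∃ i, edgeSupp (theta i) ⊆ edgeSupp C := by
  set S := spoke ⁻¹' C
  set R := rim ⁻¹' C
  have hSR : S.ncard + R.ncard = 5 := hC ▸ ncard_preimage_spoke_add_ncard_preimage_rim h1 h2 hCG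
  have hS : some '' S ⊆ edgeSupp C := by
    rintro _ ⟨a, ha, rfl⟩
    exact ⟨_, ha, by simp [spoke]⟩
  have hR : ∀ a ∈ R, some a ∈ edgeSupp C ∧ some (a + 1) ∈ edgeSupp C := fun a ha =>
    ⟨⟨_, ha, by simp [rim]⟩, ⟨_, ha, by simp [rim]⟩⟩
  have hnone : none ∈ edgeSupp C := by
    obtain ⟨a, ha⟩ : S.Nonempty := by
      by_contra hS0
      have := ncard_le_ncard (show some '' R ⊆ edgeSupp C from
        image_subset_iff.2 fun a ha => (hR a ha).1)
      rw [ncard_image_of_injective _ (Option.some_injective _)] at this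
      rw [not_nonempty_iff_eq_empty.1 hS0, ncard_empty] at hSR
      omega
    exact ⟨_, ha, by simp [spoke]⟩
  obtain ⟨x, y, hx, hy, hxy⟩ : ∃ x y, x ∈ R ∧ y ∈ R ∧ x ≠ y := by
    refine (one_lt_ncard_iff (toFinite R)).1 ?_
    have := ncard_le_ncard (insert_subset hnone hS)
    rw [ncard_insert_of_notMem (by simp), ncard_image_of_injective _ (Option.some_injective _)]
      at this
    omega
  obtain ⟨i, hi, hi'⟩ : ∃ i, i ∈ R ∧ i + 1 ∈ R := by
    by_contra! hcons
    have hyx : y ≠ x + 1 := fun h => hcons x hx (h ▸ hy)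
    have hxy' : x ≠ y + 1 := fun h => hcons y hy (h ▸ hx)
    have h5 : ({none, some x, some (x + 1), some y, some (y + 1)} : Set _).ncard = 5 := by
      rw [ncard_insert_of_notMem, ncard_insert_of_notMem, ncard_insert_of_notMem, ncard_pair]
      all_goals simp [hxy, hxy', hyx.symm, h1]
    have := ncard_le_ncard (show {none, some x, some (x + 1), some y, some (y + 1)} ⊆ edgeSupp C
      by simp [insert_subset_iff, hnone, hR x hx, hR y hy])
    omega
  refine ⟨i, ?_⟩
  rw [edgeSupp_theta]
  rintro v (rfl | rfl | rfl | rfl)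
  · exact hnone
  · exact (hR i hi).1
  · exact (hR i hi).2
  · simpa [add_assoc, one_add_one_eq_two] using (hR _ hi').2

lemma eq_theta_of_ncard_eq_five (hn : 4 ≤ n) {C : Set (Sym2 (Option (ZMod n)))}
    (hCG : C ⊆ (wheel n).edgeSet) (hC : C.ncard = 5) (hsupp : (edgeSupp C).ncard ≤ 4) :
    ∃ i, C = theta i := by
  have : NeZero n := ⟨by omega⟩
  obtain ⟨h1, h2, h3⟩ := ZMod.one_ne_zero_and_two_ne_zero_and_three_ne_zero hn
  obtain ⟨i, hi⟩ := exists_edgeSupp_theta_subset h1 h2 hCG hC hsupp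
  have hsupp_eq : edgeSupp (theta i) = edgeSupp C :=
    eq_of_subset_of_ncard_le hi (by rwa [ncard_edgeSupp_theta h1 h2])
  refine ⟨i, eq_of_subset_of_ncard_le (subset_theta_of_edgeSupp_subset h1 h2 h3 hCG hsupp_eq.ge)
    (by rw [ncard_theta h1 h2, hC]) (finite_theta i)⟩

def thetaIndices (e : Sym2 (Option (ZMod n))) : Set (ZMod n) := {i | e ∈ theta i}

lemma thetaIndices_spoke (a : ZMod n) : thetaIndices (spoke a) = {a, a - 1, a - 2} := by
  ext i
  simp only [thetaIndices, mem_ofPred_eq, spoke_mem_theta, mem_insert_iff, mem_singleton_iff,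
    eq_sub_iff_add_eq, eq_comm (a := a)]

lemma thetaIndices_rim (h2 : (2 : ZMod n) ≠ 0) (a : ZMod n) :
    thetaIndices (rim a) = {a, a - 1} := by
  ext i
  simp only [thetaIndices, mem_ofPred_eq, rim_mem_theta h2, mem_insert_iff, mem_singleton_iff,
    eq_sub_iff_add_eq, eq_comm (a := a)]

lemma ncard_thetaIndices_spoke (h1 : (1 : ZMod n) ≠ 0) (h2 : (2 : ZMod n) ≠ 0) (a : ZMod n) :
    (thetaIndices (spoke a)).ncard = 3 := by
  rw [thetaIndices_spoke, ncard_insert_of_notMem, ncard_pair]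
  · exact fun h => h1 (by linear_combination h)
  · simp only [mem_insert_iff, mem_singleton_iff, not_or]
    exact ⟨fun h => h1 (by linear_combination h), fun h => h2 (by linear_combination h)⟩

lemma ncard_thetaIndices_rim (h1 : (1 : ZMod n) ≠ 0) (h2 : (2 : ZMod n) ≠ 0) (a : ZMod n) :
    (thetaIndices (rim a)).ncard = 2 := by
  rw [thetaIndices_rim h2, ncard_pair]
  exact fun h => h1 (by linear_combination h)

lemma thetaIndices_injOn (h1 : (1 : ZMod n) ≠ 0) (h2 : (2 : ZMod n) ≠ 0)
    (h3 : (3 : ZMod n) ≠ 0) :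
    InjOn thetaIndices (wheel n).edgeSet := by
  intro e he f hf h
  rcases (mem_edgeSet h1).1 he with ⟨a, rfl⟩ | ⟨a, rfl⟩ <;>
    rcases (mem_edgeSet h1).1 hf with ⟨b, rfl⟩ | ⟨b, rfl⟩
  · rw [thetaIndices_spoke, thetaIndices_spoke] at h
    have ha : a ∈ ({b, b - 1, b - 2} : Set _) := h ▸ by simp
    have hb : b ∈ ({a, a - 1, a - 2} : Set _) := h ▸ by simp
    have hb' : b - 1 ∈ ({a, a - 1, a - 2} : Set _) := h ▸ by simp
    simp only [mem_insert_iff, mem_singleton_iff] at ha hb hb'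
    rcases ha with rfl | rfl | rfl
    · rfl
    · rcases hb with h | h | h
      · exact absurd (by linear_combination h) h1
      · exact absurd (by linear_combination h) h2
      · exact absurd (by linear_combination h) h3
    · rcases hb' with h | h | h
      · exact absurd (by linear_combination h) h1
      · exact absurd (by linear_combination h) h2
      · exact absurd (by linear_combination h) h3
  · have := congr(ncard $h)
    rw [ncard_thetaIndices_spoke h1 h2, ncard_thetaIndices_rim h1 h2] at this
    omega
  · have := congr(ncard $h)
    rw [ncard_thetaIndices_spoke h1 h2, ncard_thetaIndices_rim h1 h2] at this
    omega
  · rw [thetaIndices_rim h2, thetaIndices_rim h2, pair_eq_pair_iff] at h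
    rcases h with ⟨rfl, -⟩ | ⟨h, h'⟩
    · rfl
    · exact absurd (by linear_combination h - h') h2

lemma exists_perm_thetaIndices (hn : 4 ≤ n) {σ : Equiv.Perm (Sym2 (Option (ZMod n)))}
    (hσ : ∀ C, IsBicycle (wheel n) C → IsBicycle (wheel n) (σ '' C)) :
    ∃ π : Equiv.Perm (ZMod n), ∀ e, thetaIndices (σ e) = π '' thetaIndices e := by
  have : NeZero n := ⟨by omega⟩
  obtain ⟨h1, h2, -⟩ := ZMod.one_ne_zero_and_two_ne_zero_and_three_ne_zero hn
  have hθ (i : ZMod n) : ∃ j, σ '' theta i = theta j := by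
    obtain ⟨hCG, -, -, hlt, -⟩ := hσ _ (isBicycle_theta h1 h2 i)
    have h5 : (σ '' theta i).ncard = 5 := by
      rw [ncard_image_of_injective _ σ.injective, ncard_theta h1 h2]
    exact eq_theta_of_ncard_eq_five hn hCG h5 (by omega)
  choose f hf using hθ
  have hf_inj : Injective f := fun i j h =>
    theta_injective h1 h2 (image_injective.2 σ.injective (by rw [hf, hf, h]))
  let π := Equiv.ofBijective f (Finite.injective_iff_bijective.1 hf_inj)
  refine ⟨π, fun e => ext fun i => ?_⟩
  obtain ⟨j, rfl⟩ := π.surjective i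
  simp only [thetaIndices, π, Equiv.ofBijective_apply, ← hf, σ.injective.mem_set_image,
    hf_inj.mem_set_image, mem_ofPred_eq]

section Rigidity

variable {σ : Equiv.Perm (Sym2 (Option (ZMod n)))} {π : Equiv.Perm (ZMod n)}

lemma exists_apply_rim_eq_rim (h1 : (1 : ZMod n) ≠ 0) (h2 : (2 : ZMod n) ≠ 0)
    (hfix : ∀ e ∉ (wheel n).edgeSet, σ e = e)
    (hπ : ∀ e, thetaIndices (σ e) = π '' thetaIndices e) (a : ZMod n) :
    ∃ b, σ (rim a) = rim b := by
  have hcard := congr(ncard $(hπ (rim a)))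
  rw [ncard_image_of_injective _ π.injective, ncard_thetaIndices_rim h1 h2] at hcard
  have hedge := (Equiv.Perm.apply_mem_iff_of_fixes_compl hfix _).2 (rim_mem_edgeSet h1 a)
  rcases (mem_edgeSet h1).1 hedge with ⟨b, hb⟩ | ⟨b, hb⟩
  · rw [hb, ncard_thetaIndices_spoke h1 h2] at hcard
    omega
  · exact ⟨b, hb⟩

lemma apply_add_one_of_thetaIndices (h1 : (1 : ZMod n) ≠ 0) (h2 : (2 : ZMod n) ≠ 0)
    (hfix : ∀ e ∉ (wheel n).edgeSet, σ e = e)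
    (hπ : ∀ e, thetaIndices (σ e) = π '' thetaIndices e) (x : ZMod n) :
    π (x + 1) = π x + 1 ∨ π x = π (x + 1) + 1 := by
  obtain ⟨b, hb⟩ := exists_apply_rim_eq_rim h1 h2 hfix hπ (x + 1)
  have := hπ (rim (x + 1))
  rw [hb, thetaIndices_rim h2, thetaIndices_rim h2, image_pair, add_sub_cancel_right,
    pair_eq_pair_iff] at this
  rcases this with ⟨h, h'⟩ | ⟨h, h'⟩
  · exact .inl (by rw [← h, ← h', sub_add_cancel])
  · exact .inr (by rw [← h, ← h', sub_add_cancel])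

lemma eq_one_of_apply_rim_zero_of_apply_rim_one (hn : 4 ≤ n)
    (hfix : ∀ e ∉ (wheel n).edgeSet, σ e = e)
    (hσ : ∀ C, IsBicycle (wheel n) C → IsBicycle (wheel n) (σ '' C))
    (h₀ : σ (rim 0) = rim 0) (h₁ : σ (rim 1) = rim 1) : σ = 1 := by
  have : NeZero n := ⟨by omega⟩
  obtain ⟨h1, h2, h3⟩ := ZMod.one_ne_zero_and_two_ne_zero_and_three_ne_zero hn
  obtain ⟨π, hπ⟩ := exists_perm_thetaIndices hn hσ
  have hrim (a : ZMod n) (ha : σ (rim a) = rim a) : π '' {a, a - 1} = {a, a - 1} := by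
    rw [← thetaIndices_rim h2, ← hπ, ha]
  have hπ₀ : π 0 = 0 := by
    have m₀ : π 0 ∈ ({0, 0 - 1} : Set (ZMod n)) :=
      hrim 0 h₀ ▸ mem_image_of_mem π (by simp)
    have m₁ : π 0 ∈ ({1, 1 - 1} : Set (ZMod n)) :=
      hrim 1 h₁ ▸ mem_image_of_mem π (by simp)
    simp only [mem_insert_iff, mem_singleton_iff, sub_self] at m₀ m₁
    rcases m₁ with h | h
    · rcases m₀ with h' | h'
      · exact absurd (h.symm.trans h') h1
      · exact absurd (by linear_combination h' - h) h2
    · exact h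
  have hπ₁ : π 1 = 1 := by
    have m : π 1 ∈ ({1, 1 - 1} : Set (ZMod n)) := hrim 1 h₁ ▸ mem_image_of_mem π (by simp)
    simp only [mem_insert_iff, mem_singleton_iff, sub_self] at m
    exact m.resolve_right fun h => h1 (π.injective (h.trans hπ₀.symm))
  have hπ_one : π = 1 := ZMod.perm_eq_one_of_adjacent
    (apply_add_one_of_thetaIndices h1 h2 hfix hπ) (a := 0) hπ₀ (by rwa [zero_add])
  refine Equiv.ext fun e => show σ e = e from ?_
  by_cases he : e ∈ (wheel n).edgeSet
  · exact thetaIndices_injOn h1 h2 h3 ((Equiv.Perm.apply_mem_iff_of_fixes_compl hfix e).2 he) he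
      (by rw [hπ, hπ_one, Equiv.Perm.coe_one, image_id])
  · exact hfix e he

end Rigidity

section FixingSets

variable {M : Matroid (Sym2 (Option (ZMod n)))}

lemma isFixingSet_rim_zero_rim_one (hn : 4 ≤ n) (hE : M.E = (wheel n).edgeSet)
    (hC : ∀ C, MCirc M C ↔ IsBicycle (wheel n) C) : IsFixingSet M {rim 0, rim 1} := by
  have h1 := (ZMod.one_ne_zero_and_two_ne_zero_and_three_ne_zero hn).1
  refine ⟨hE ▸ pair_subset (rim_mem_edgeSet h1 0) (rim_mem_edgeSet h1 1),
    fun σ hσ hfix => ?_⟩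
  exact eq_one_of_apply_rim_zero_of_apply_rim_one hn (fun e he => hσ.1 e (hE ▸ he))
    (fun C hBC => (hC _).1 (hσ.mcirc_image ((hC C).2 hBC))) (hfix _ (.inl rfl))
    (hfix _ (.inr rfl))

lemma two_le_ncard_of_isFixingSet [NeZero n] (h1 : (1 : ZMod n) ≠ 0) (h2 : (2 : ZMod n) ≠ 0)
    (hE : M.E = (wheel n).edgeSet) (hC : ∀ C, MCirc M C ↔ IsBicycle (wheel n) C)
    {A : Set (Sym2 (Option (ZMod n)))} (hA : IsFixingSet M A) : 2 ≤ A.ncard := by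
  by_contra! hA1
  obtain ⟨e, he, hAe⟩ : ∃ e ∈ (wheel n).edgeSet, A ⊆ {e} := by
    have hsub : A.Subsingleton := (ncard_le_one_iff_subsingleton (s := A)).1 (by omega)
    rcases hsub.eq_empty_or_singleton with rfl | ⟨e, rfl⟩
    · exact ⟨spoke 0, spoke_mem_edgeSet h1 0, empty_subset _⟩
    · exact ⟨e, hE ▸ hA.1 rfl, subset_rfl⟩
  obtain ⟨c, hc⟩ := exists_map_reflection_eq h1 he
  refine edgePerm_reflection_ne_one h1 h2 c
    (hA.2 _ ((reflection c).isMAuto_edgePerm hE hC) fun a ha => ?_)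
  rw [hAe ha, SimpleGraph.Iso.edgePerm_apply_of_mem _ he, hc]

end FixingSets

end Wheel

/-- For `n ≥ 4`, the fixing number of the bicircular matroid of the wheel `W n` is `2`;
in particular the two adjacent rim edges `a₁ = {some 0, some 1}` and
`a₂ = {some 1, some 2}` form a fixing set. -/
theorem stmt13 (n : ℕ) (hn : 4 ≤ n)
    (M : Matroid (Sym2 (Option (ZMod n))))
    (hE : M.E = (wheel n).edgeSet)
    (hC : ∀ C : Set (Sym2 (Option (ZMod n))), MCirc M C ↔ IsBicycle (wheel n) C) :
    fixNum M = 2 ∧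
      IsFixingSet M {s(some (0 : ZMod n), some (1 : ZMod n)),
        s(some (1 : ZMod n), some (2 : ZMod n))} := by
  have : NeZero n := ⟨by omega⟩
  obtain ⟨h1, h2, -⟩ := ZMod.one_ne_zero_and_two_ne_zero_and_three_ne_zero hn
  have hfix : IsFixingSet M {s(some (0 : ZMod n), some 1), s(some 1, some 2)} := by
    simpa [Wheel.rim, one_add_one_eq_two] using Wheel.isFixingSet_rim_zero_rim_one hn hE hC
  have hmem : 2 ∈ {k | ∃ A, IsFixingSet M A ∧ A.Finite ∧ A.ncard = k} :=
    ⟨_, hfix, toFinite _, ncard_pair (by simp [h1.symm, h2.symm])⟩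
  refine ⟨le_antisymm (Nat.sInf_le hmem) (le_csInf ⟨2, hmem⟩ ?_), hfix⟩
  rintro k ⟨A, hA, -, rfl⟩
  exact Wheel.two_le_ncard_of_isFixingSet h1 h2 hE hC hA
end
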